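/- arXiv:2510.19229 — 2 statements merged into one kernel-verified Lean document; each statement's English description precedes it below -/
import Mathlib

section
/- Merge criterion: let ω be a partition with two distinct cluster labels a and b, and let ω' be the partition obtained by relabeling all items in cluster b to label a. Let A = Σ over pairs i<j with {ω(i),ω(j)} = {a,b} of w⁺(i,j) (cross attraction) and R = Σ over the same pairs of w⁻(i,j) (cross repulsion). Then H_γ(ω') - H_γ(ω) = -A + γ·R; in particular, if R > 0 the merge strictly lowers the energy if and only if γ < A / R. -/
def hA {n : ℕ} (wp : Fin n → Fin n → ℝ) (ω : Fin n → ℕ) : ℝ :=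
  -∑ i : Fin n, ∑ j : Fin n, if i < j ∧ ω i = ω j then wp i j else 0

def hR {n : ℕ} (wm : Fin n → Fin n → ℝ) (ω : Fin n → ℕ) : ℝ :=
  ∑ i : Fin n, ∑ j : Fin n, if i < j ∧ ω i = ω j then wm i j else 0

def Ham {n : ℕ} (wp wm : Fin n → Fin n → ℝ) (γ : ℝ) (ω : Fin n → ℕ) : ℝ :=
  hA wp ω + γ * hR wm ω

open Finset

section ClusterSums

variable {ι α M : Type*} [Fintype ι] [LT ι] [DecidableLT ι] [DecidableEq α] [AddCommMonoid M]

def sameClusterSum (f : ι → ι → M) (ω : ι → α) : M :=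
  ∑ i, ∑ j, if i < j ∧ ω i = ω j then f i j else 0

def crossClusterSum (f : ι → ι → M) (ω : ι → α) (a b : α) : M :=
  ∑ i, ∑ j, if i < j ∧ (ω i = a ∧ ω j = b ∨ ω i = b ∧ ω j = a) then f i j else 0

lemma relabel_eq_relabel_iff {a b x y : α} (hab : a ≠ b) :
    (if x = b then a else x) = (if y = b then a else y) ↔
      x = y ∨ (x = a ∧ y = b ∨ x = b ∧ y = a) := by
  split_ifs <;> grind

/-- Since `a ≠ b`, a pair straddling `a` and `b` was not in one cluster before the merge, so the
merged indicator is the sum of the old and the cross indicators. -/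
lemma sameClusterSum_merge {a b : α} (hab : a ≠ b) (f : ι → ι → M) (ω : ι → α) :
    sameClusterSum f (fun i => if ω i = b then a else ω i) =
      sameClusterSum f ω + crossClusterSum f ω a b := by
  simp only [sameClusterSum, crossClusterSum, ← sum_add_distrib, relabel_eq_relabel_iff hab]
  refine sum_congr rfl fun i _ => sum_congr rfl fun j _ => ?_
  by_cases hsame : ω i = ω j
  · have hcross : ¬(i < j ∧ (ω i = a ∧ ω j = b ∨ ω i = b ∧ ω j = a)) := by grind
    rw [if_neg hcross, add_zero]
    simp [hsame]
  · simp [hsame]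

end ClusterSums

lemma Ham_merge_sub {n : ℕ} (wp wm : Fin n → Fin n → ℝ) (γ : ℝ) (ω : Fin n → ℕ) {a b : ℕ}
    (hab : a ≠ b) :
    Ham wp wm γ (fun i => if ω i = b then a else ω i) - Ham wp wm γ ω =
      -crossClusterSum wp ω a b + γ * crossClusterSum wm ω a b := by
  change -sameClusterSum wp _ + γ * sameClusterSum wm _ -
      (-sameClusterSum wp ω + γ * sameClusterSum wm ω) = _
  rw [sameClusterSum_merge hab, sameClusterSum_merge hab]
  ring

theorem merge_criterion_general {n : ℕ} (wp wm : Fin n → Fin n → ℝ)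
    (γ : ℝ) (ω : Fin n → ℕ) (a b : ℕ) (hab : a ≠ b)
    (ω' : Fin n → ℕ) (hω' : ∀ i, ω' i = if ω i = b then a else ω i)
    (A R : ℝ)
    (hA' : A = ∑ i : Fin n, ∑ j : Fin n,
      if i < j ∧ ((ω i = a ∧ ω j = b) ∨ (ω i = b ∧ ω j = a)) then wp i j else 0)
    (hR' : R = ∑ i : Fin n, ∑ j : Fin n,
      if i < j ∧ ((ω i = a ∧ ω j = b) ∨ (ω i = b ∧ ω j = a)) then wm i j else 0) :
    Ham wp wm γ ω' - Ham wp wm γ ω = -A + γ * R ∧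
      (0 < R → (Ham wp wm γ ω' < Ham wp wm γ ω ↔ γ < A / R)) := by
  have hdiff : Ham wp wm γ ω' - Ham wp wm γ ω = -A + γ * R := by
    rw [funext hω', Ham_merge_sub wp wm γ ω hab, hA', hR', crossClusterSum, crossClusterSum]
  refine ⟨hdiff, fun hR => ?_⟩
  rw [← sub_neg, hdiff, lt_div_iff₀ hR]
  constructor <;> intro <;> linarith

theorem merge_criterion {n : ℕ} (wp wm : Fin n → Fin n → ℝ)
    (hwp : ∀ i j, 0 ≤ wp i j) (hwm : ∀ i j, 0 ≤ wm i j)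
    (hwps : ∀ i j, wp i j = wp j i) (hwms : ∀ i j, wm i j = wm j i)
    (γ : ℝ) (ω : Fin n → ℕ) (a b : ℕ) (hab : a ≠ b)
    (ω' : Fin n → ℕ) (hω' : ∀ i, ω' i = if ω i = b then a else ω i)
    (A R : ℝ)
    (hA' : A = ∑ i : Fin n, ∑ j : Fin n,
      if i < j ∧ ((ω i = a ∧ ω j = b) ∨ (ω i = b ∧ ω j = a)) then wp i j else 0)
    (hR' : R = ∑ i : Fin n, ∑ j : Fin n,
      if i < j ∧ ((ω i = a ∧ ω j = b) ∨ (ω i = b ∧ ω j = a)) then wm i j else 0) :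
    Ham wp wm γ ω' - Ham wp wm γ ω = -A + γ * R ∧
      (0 < R → (Ham wp wm γ ω' < Ham wp wm γ ω ↔ γ < A / R)) :=
  merge_criterion_general wp wm γ ω a b hab ω' hω' A R hA' hR'
end

section
/- If the coarsest partition ω_0 is optimal at some γ₀ ≥ 0, then ω_0 is optimal at every γ with 0 ≤ γ ≤ γ₀. -/
/-! `Ham γ ω = hA ω + γ hR ω` is affine in `γ` with slope `hR ω`, and the constant labeling
maximizes `hR` because the weights `wm` are nonnegative. Hence `Ham γ ω₀ - Ham γ ω` is
nondecreasing in `γ`; being `≤ 0` at `γ₀`, it is `≤ 0` for every `γ ≤ γ₀`. -/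

lemma hR_le_hR_of_const {n : ℕ} {wm : Fin n → Fin n → ℝ} (hwm : ∀ i j, 0 ≤ wm i j)
    {ω0 : Fin n → ℕ} (hconst : ∀ i j, ω0 i = ω0 j) (ω : Fin n → ℕ) :
    hR wm ω ≤ hR wm ω0 := by
  unfold hR
  gcongr with i _ j _
  split_ifs with h h₀ h₀
  · exact le_rfl
  · exact absurd ⟨h.1, hconst i j⟩ h₀
  · exact hwm i j
  · exact le_rfl

lemma Ham_sub_Ham_eq {n : ℕ} (wp wm : Fin n → Fin n → ℝ) (γ γ₀ : ℝ) (ω ω' : Fin n → ℕ) :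
    Ham wp wm γ ω - Ham wp wm γ ω' =
      Ham wp wm γ₀ ω - Ham wp wm γ₀ ω' - (γ₀ - γ) * (hR wm ω - hR wm ω') := by
  unfold Ham
  ring

lemma Ham_le_Ham_of_le {n : ℕ} {wp wm : Fin n → Fin n → ℝ} {γ γ₀ : ℝ} {ω ω' : Fin n → ℕ}
    (hγ : γ ≤ γ₀) (hR_le : hR wm ω' ≤ hR wm ω) (h₀ : Ham wp wm γ₀ ω ≤ Ham wp wm γ₀ ω') :
    Ham wp wm γ ω ≤ Ham wp wm γ ω' := by
  have hslope : 0 ≤ (γ₀ - γ) * (hR wm ω - hR wm ω') :=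
    mul_nonneg (sub_nonneg.2 hγ) (sub_nonneg.2 hR_le)
  have := Ham_sub_Ham_eq wp wm γ γ₀ ω ω'
  linarith

theorem coarsest_optimal_downward_general {n : ℕ} (wp wm : Fin n → Fin n → ℝ)
    (hwm : ∀ i j, 0 ≤ wm i j)
    (ω0 : Fin n → ℕ) (hconst : ∀ i j, ω0 i = ω0 j)
    (γ₀ : ℝ)
    (hopt : ∀ ω : Fin n → ℕ, Ham wp wm γ₀ ω0 ≤ Ham wp wm γ₀ ω) :
    ∀ γ : ℝ, 0 ≤ γ → γ ≤ γ₀ → ∀ ω : Fin n → ℕ, Ham wp wm γ ω0 ≤ Ham wp wm γ ω :=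
  fun _ _ hγ ω => Ham_le_Ham_of_le hγ (hR_le_hR_of_const hwm hconst ω) (hopt ω)

theorem coarsest_optimal_downward {n : ℕ} (wp wm : Fin n → Fin n → ℝ)
    (hwp : ∀ i j, 0 ≤ wp i j) (hwm : ∀ i j, 0 ≤ wm i j)
    (hwps : ∀ i j, wp i j = wp j i) (hwms : ∀ i j, wm i j = wm j i)
    (ω0 : Fin n → ℕ) (hconst : ∀ i j, ω0 i = ω0 j)
    (γ₀ : ℝ) (hγ₀ : 0 ≤ γ₀)
    (hopt : ∀ ω : Fin n → ℕ, Ham wp wm γ₀ ω0 ≤ Ham wp wm γ₀ ω) :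
    ∀ γ : ℝ, 0 ≤ γ → γ ≤ γ₀ → ∀ ω : Fin n → ℕ, Ham wp wm γ ω0 ≤ Ham wp wm γ ω :=
  coarsest_optimal_downward_general wp wm hwm ω0 hconst γ₀ hopt
end
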